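/- arXiv:2309.13816 — 2 statements merged into one kernel-verified Lean document; each statement's English description precedes it below -/
import Mathlib

section
/- Let ρ>0 and suppose ∇f and every ∇h_i (i=1,…,mE) and every ∇g_i (i=1,…,mI) are Lipschitz continuous on ℝⁿ with constant L. Then for all x, d ∈ ℝⁿ and all α ∈ [0,1]: P_ρ(x+αd) − P_ρ(x) ≤ α P'_ρ(x;d) + ((ρ + mE + mI)L/2) α² ‖d‖², where P'_ρ(x;d) := ρ∇f(x)ᵀd + c'(x;d) − c(x). Consequently, for any σ ∈ (0,1) and any m > 0, if P'_ρ(x;d) ≤ −(m/2)‖d‖², then the Armijo condition P_ρ(x+αd) − P_ρ(x) ≤ σ α P'_ρ(x;d) holds for every α ∈ (0, β], where β = min{1, (1−σ)m/((ρ+mE+mI)L)} does not depend on x or d. -/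
open RealInnerProductSpace

/-!
Every summand of `P_ρ` has the form `ψ ∘ φ` with `ψ` convex and `1`-Lipschitz (`ρ • id`, `|·|`,
`max 0 (-·)`) and `φ` with `L`-Lipschitz gradient. The descent lemma puts `φ (x + α • d)` within
`L α² ‖d‖² / 2` of `φ x + α ⟪∇φ x, d⟫`; the Lipschitz bound transfers this error through `ψ`, and
convexity bounds `ψ` of the linearization by the chord between `α = 0` and `α = 1`. For the Armijo
condition, `α (ρ + mE + mI) L ≤ (1 - σ) m` lets `(1 - σ) α P'_ρ(x; d) ≤ -(1 - σ) α m ‖d‖² / 2`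
absorb the quadratic term.
-/

theorem ConvexOn.le_add_mul_sub_add_of_abs_sub_le {ψ : ℝ → ℝ} (hconv : ConvexOn ℝ Set.univ ψ)
    (hlip : LipschitzWith 1 ψ) {u a t α e : ℝ} (hα₀ : 0 ≤ α) (hα₁ : α ≤ 1)
    (hu : |u - (a + α * t)| ≤ e) :
    ψ u ≤ ψ a + α * (ψ (a + t) - ψ a) + e := by
  have hchord : ψ (a + α * t) ≤ ψ a + α * (ψ (a + t) - ψ a) := by
    have := hconv.2 (Set.mem_univ a) (Set.mem_univ (a + t)) (sub_nonneg.2 hα₁) hα₀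
      (sub_add_cancel 1 α)
    simp only [smul_eq_mul, show (1 - α) * a + α * (a + t) = a + α * t by ring] at this
    linarith
  have hclose : ψ u - ψ (a + α * t) ≤ e := by
    have := hlip.dist_le_mul u (a + α * t)
    rw [Real.dist_eq, Real.dist_eq, NNReal.coe_one, one_mul] at this
    exact (le_abs_self _).trans (this.trans hu)
  linarith

section ExactPenalty

variable {E : Type*} [NormedAddCommGroup E] [InnerProductSpace ℝ E] [CompleteSpace E]
  {φ : E → ℝ} {L : ℝ}

theorem sub_le_inner_gradient_add_of_lipschitz_gradient (hφ : Differentiable ℝ φ)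
    (hLip : ∀ a b, ‖gradient φ a - gradient φ b‖ ≤ L * ‖a - b‖) (x d : E) :
    φ (x + d) - φ x ≤ ⟪gradient φ x, d⟫ + L / 2 * ‖d‖ ^ 2 := by
  set ψ : ℝ → ℝ := fun t => φ (x + t • d) - t * ⟪gradient φ x, d⟫ - L / 2 * ‖d‖ ^ 2 * t ^ 2
  have hψ : ∀ t : ℝ, HasDerivAt ψ
      (⟪gradient φ (x + t • d), d⟫ - ⟪gradient φ x, d⟫ - L * ‖d‖ ^ 2 * t) t := by
    intro t
    have hline : HasDerivAt (fun t : ℝ => x + t • d) d t := by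
      simpa using ((hasDerivAt_id t).smul_const d).const_add x
    have hcomp := (hφ (x + t • d)).hasGradientAt.hasFDerivAt.comp_hasDerivAt t hline
    rw [InnerProductSpace.toDual_apply_apply] at hcomp
    have hquad := (hasDerivAt_pow 2 t).const_mul (L / 2 * ‖d‖ ^ 2)
    refine ((hcomp.sub ((hasDerivAt_id t).mul_const _)).sub hquad).congr_deriv ?_
    simp only [Nat.cast_ofNat, Nat.add_one_sub_one, pow_one, one_mul]
    ring
  have hψ' : ∀ t ∈ Set.Ioo (0 : ℝ) 1,
      ⟪gradient φ (x + t • d), d⟫ - ⟪gradient φ x, d⟫ - L * ‖d‖ ^ 2 * t ≤ 0 := by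
    intro t ht
    have : ⟪gradient φ (x + t • d) - gradient φ x, d⟫ ≤ L * ‖d‖ ^ 2 * t :=
      calc ⟪gradient φ (x + t • d) - gradient φ x, d⟫
          ≤ ‖gradient φ (x + t • d) - gradient φ x‖ * ‖d‖ := real_inner_le_norm _ _
        _ ≤ L * ‖x + t • d - x‖ * ‖d‖ := by gcongr; exact hLip _ _
        _ = L * ‖d‖ ^ 2 * t := by
          rw [add_sub_cancel_left, norm_smul, Real.norm_of_nonneg ht.1.le]; ring
    rw [inner_sub_left] at this
    linarith
  have hanti : AntitoneOn ψ (Set.Icc 0 1) := by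
    refine antitoneOn_of_hasDerivWithinAt_nonpos (convex_Icc 0 1)
      (fun t _ => (hψ t).continuousAt.continuousWithinAt)
      (fun t _ => (hψ t).hasDerivWithinAt) ?_
    rw [interior_Icc]
    exact hψ'
  have := hanti (Set.left_mem_Icc.2 zero_le_one) (Set.right_mem_Icc.2 zero_le_one) zero_le_one
  simp only [ψ, zero_smul, one_smul, add_zero, zero_mul, one_pow, mul_one, sub_zero] at this
  linarith

theorem abs_sub_sub_inner_gradient_le_of_lipschitz_gradient (hφ : Differentiable ℝ φ)
    (hLip : ∀ a b, ‖gradient φ a - gradient φ b‖ ≤ L * ‖a - b‖) (x d : E) :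
    |φ (x + d) - (φ x + ⟪gradient φ x, d⟫)| ≤ L / 2 * ‖d‖ ^ 2 := by
  have hgrad : ∀ a, gradient (-φ) a = -gradient φ a := fun a => by
    rw [gradient, gradient, fderiv_neg, map_neg]
  have hupper := sub_le_inner_gradient_add_of_lipschitz_gradient hφ hLip x d
  have hlower := sub_le_inner_gradient_add_of_lipschitz_gradient hφ.neg
    (fun a b => by rw [hgrad, hgrad, ← norm_neg, neg_sub_neg, neg_sub]; exact hLip a b) x d
  rw [hgrad, inner_neg_left] at hlower
  simp only [Pi.neg_apply] at hlower
  rw [abs_le]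
  constructor <;> linarith

theorem ConvexOn.comp_add_smul_le_of_lipschitz_gradient {ψ : ℝ → ℝ}
    (hconv : ConvexOn ℝ Set.univ ψ) (hlip : LipschitzWith 1 ψ) (hφ : Differentiable ℝ φ)
    (hLip : ∀ a b, ‖gradient φ a - gradient φ b‖ ≤ L * ‖a - b‖) (x d : E) {α : ℝ}
    (hα₀ : 0 ≤ α) (hα₁ : α ≤ 1) :
    ψ (φ (x + α • d)) ≤
      ψ (φ x) + α * (ψ (φ x + ⟪gradient φ x, d⟫) - ψ (φ x)) + L / 2 * α ^ 2 * ‖d‖ ^ 2 := by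
  refine hconv.le_add_mul_sub_add_of_abs_sub_le hlip hα₀ hα₁ ?_
  have := abs_sub_sub_inner_gradient_le_of_lipschitz_gradient hφ hLip x (α • d)
  rwa [inner_smul_right, norm_smul, mul_pow, Real.norm_eq_abs, sq_abs, ← mul_assoc] at this

theorem ConvexOn.sum_comp_add_smul_le_of_lipschitz_gradient {ι : Type*} [Fintype ι]
    {ψ : ℝ → ℝ} {φ : ι → E → ℝ} (hconv : ConvexOn ℝ Set.univ ψ) (hlip : LipschitzWith 1 ψ)
    (hφ : ∀ i, Differentiable ℝ (φ i))
    (hLip : ∀ i a b, ‖gradient (φ i) a - gradient (φ i) b‖ ≤ L * ‖a - b‖) (x d : E) {α : ℝ}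
    (hα₀ : 0 ≤ α) (hα₁ : α ≤ 1) :
    ∑ i, ψ (φ i (x + α • d)) ≤
      ∑ i, ψ (φ i x) + α * (∑ i, ψ (φ i x + ⟪gradient (φ i) x, d⟫) - ∑ i, ψ (φ i x)) +
        Fintype.card ι * (L / 2 * α ^ 2 * ‖d‖ ^ 2) := by
  refine (Finset.sum_le_sum fun i _ =>
    hconv.comp_add_smul_le_of_lipschitz_gradient hlip (hφ i) (hLip i) x d hα₀ hα₁).trans_eq ?_
  simp only [Finset.sum_add_distrib, ← Finset.mul_sum, Finset.sum_sub_distrib, Finset.sum_const,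
    Finset.card_univ, nsmul_eq_mul]
  ring

variable {ι κ : Type*} [Fintype ι] [Fintype κ]

def constraintViolation (h : ι → E → ℝ) (g : κ → E → ℝ) (x : E) : ℝ :=
  (∑ i, |h i x|) + ∑ i, max 0 (-(g i x))

noncomputable def linearizedConstraintViolation (h : ι → E → ℝ) (g : κ → E → ℝ) (x d : E) : ℝ :=
  (∑ i, |h i x + ⟪gradient (h i) x, d⟫|) + ∑ i, max 0 (-(g i x + ⟪gradient (g i) x, d⟫))

def exactPenalty (ρ : ℝ) (f : E → ℝ) (h : ι → E → ℝ) (g : κ → E → ℝ) (x : E) : ℝ :=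
  ρ * f x + constraintViolation h g x

noncomputable def exactPenaltyDirDeriv (ρ : ℝ) (f : E → ℝ) (h : ι → E → ℝ) (g : κ → E → ℝ)
    (x d : E) : ℝ :=
  ρ * ⟪gradient f x, d⟫ + linearizedConstraintViolation h g x d - constraintViolation h g x

theorem exactPenalty_add_smul_sub_le {ρ : ℝ} {f : E → ℝ} {h : ι → E → ℝ} {g : κ → E → ℝ}
    (hρ : 0 ≤ ρ) (hf : Differentiable ℝ f) (hh : ∀ i, Differentiable ℝ (h i))
    (hg : ∀ i, Differentiable ℝ (g i))
    (hLf : ∀ a b, ‖gradient f a - gradient f b‖ ≤ L * ‖a - b‖)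
    (hLh : ∀ i a b, ‖gradient (h i) a - gradient (h i) b‖ ≤ L * ‖a - b‖)
    (hLg : ∀ i a b, ‖gradient (g i) a - gradient (g i) b‖ ≤ L * ‖a - b‖)
    (x d : E) {α : ℝ} (hα₀ : 0 ≤ α) (hα₁ : α ≤ 1) :
    exactPenalty ρ f h g (x + α • d) - exactPenalty ρ f h g x ≤
      α * exactPenaltyDirDeriv ρ f h g x d +
        (ρ + Fintype.card ι + Fintype.card κ) * L / 2 * α ^ 2 * ‖d‖ ^ 2 := by
  have hobj := (convexOn_id convex_univ).comp_add_smul_le_of_lipschitz_gradient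
    LipschitzWith.id hf hLf x d hα₀ hα₁
  have heq := ConvexOn.sum_comp_add_smul_le_of_lipschitz_gradient (ψ := fun u => |u|)
    convexOn_univ_norm lipschitzWith_one_norm hh hLh x d hα₀ hα₁
  have hineq := ConvexOn.sum_comp_add_smul_le_of_lipschitz_gradient (ψ := fun u => max 0 (-u))
    ((convexOn_const 0 convex_univ).sup (concaveOn_id convex_univ).neg)
    (LipschitzWith.id.neg.const_max 0) hg hLg x d hα₀ hα₁
  simp only [id] at hobj heq hineq
  simp only [exactPenalty, exactPenaltyDirDeriv, constraintViolation,
    linearizedConstraintViolation]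
  linarith [mul_le_mul_of_nonneg_left hobj hρ]

end ExactPenalty

theorem armijo_of_quadratic_model {Δ D α K m σ r : ℝ} (hΔ : Δ ≤ α * D + K / 2 * α ^ 2 * r)
    (hD : D ≤ -(m / 2) * r) (hr : 0 ≤ r) (hα : 0 ≤ α) (hσ : σ ≤ 1)
    (hαK : α * K ≤ (1 - σ) * m) : Δ ≤ σ * α * D := by
  nlinarith [mul_le_mul_of_nonneg_left hD (mul_nonneg (sub_nonneg.2 hσ) hα),
    mul_le_mul_of_nonneg_right hαK (mul_nonneg hα hr)]

/-- If all gradients are `L`-Lipschitz, then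
`P_ρ(x+αd) − P_ρ(x) ≤ α P'_ρ(x;d) + ((ρ+mE+mI)L/2) α² ‖d‖²` for `α ∈ [0,1]`;
consequently, for `σ ∈ (0,1)` and `m > 0`, whenever `P'_ρ(x;d) ≤ −(m/2)‖d‖²`,
the Armijo condition holds for every `α ∈ (0, β]`,
`β = min{1, (1−σ)m/((ρ+mE+mI)L)}`, independently of `x` and `d`. -/
theorem stmt13 {n mE mI : ℕ}
    (f : EuclideanSpace ℝ (Fin n) → ℝ)
    (h : Fin mE → EuclideanSpace ℝ (Fin n) → ℝ)
    (g : Fin mI → EuclideanSpace ℝ (Fin n) → ℝ)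
    (hf : ContDiff ℝ 1 f) (hh : ∀ i, ContDiff ℝ 1 (h i)) (hg : ∀ i, ContDiff ℝ 1 (g i))
    (ρ : ℝ) (hρ : 0 < ρ)
    (L : ℝ) (hL : 0 ≤ L)
    (hLf : ∀ a b : EuclideanSpace ℝ (Fin n),
      ‖gradient f a - gradient f b‖ ≤ L * ‖a - b‖)
    (hLh : ∀ i, ∀ a b : EuclideanSpace ℝ (Fin n),
      ‖gradient (h i) a - gradient (h i) b‖ ≤ L * ‖a - b‖)
    (hLg : ∀ i, ∀ a b : EuclideanSpace ℝ (Fin n),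
      ‖gradient (g i) a - gradient (g i) b‖ ≤ L * ‖a - b‖) :
    (∀ (x d : EuclideanSpace ℝ (Fin n)), ∀ α ∈ Set.Icc (0:ℝ) 1,
      (ρ * f (x + α • d) + ((∑ i, |h i (x + α • d)|) + ∑ i, max 0 (-(g i (x + α • d)))))
        - (ρ * f x + ((∑ i, |h i x|) + ∑ i, max 0 (-(g i x)))) ≤
      α * (ρ * ⟪gradient f x, d⟫ +
            ((∑ i, |h i x + ⟪gradient (h i) x, d⟫|) +
              ∑ i, max 0 (-(g i x + ⟪gradient (g i) x, d⟫))) -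
            ((∑ i, |h i x|) + ∑ i, max 0 (-(g i x)))) +
        (ρ + mE + mI) * L / 2 * α ^ 2 * ‖d‖ ^ 2) ∧
    (∀ σ ∈ Set.Ioo (0:ℝ) 1, ∀ m : ℝ, 0 < m →
      ∀ (x d : EuclideanSpace ℝ (Fin n)),
      ρ * ⟪gradient f x, d⟫ +
          ((∑ i, |h i x + ⟪gradient (h i) x, d⟫|) +
            ∑ i, max 0 (-(g i x + ⟪gradient (g i) x, d⟫))) -
          ((∑ i, |h i x|) + ∑ i, max 0 (-(g i x))) ≤ -(m / 2) * ‖d‖ ^ 2 →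
      ∀ α ∈ Set.Ioc (0:ℝ) (min 1 ((1 - σ) * m / ((ρ + mE + mI) * L))),
        (ρ * f (x + α • d) +
            ((∑ i, |h i (x + α • d)|) + ∑ i, max 0 (-(g i (x + α • d)))))
          - (ρ * f x + ((∑ i, |h i x|) + ∑ i, max 0 (-(g i x)))) ≤
        σ * α * (ρ * ⟪gradient f x, d⟫ +
            ((∑ i, |h i x + ⟪gradient (h i) x, d⟫|) +
              ∑ i, max 0 (-(g i x + ⟪gradient (g i) x, d⟫))) -
            ((∑ i, |h i x|) + ∑ i, max 0 (-(g i x))))) := by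
  have hdesc := fun x d α (hα : α ∈ Set.Icc (0 : ℝ) 1) =>
    exactPenalty_add_smul_sub_le hρ.le (hf.differentiable one_ne_zero)
      (fun i => (hh i).differentiable one_ne_zero) (fun i => (hg i).differentiable one_ne_zero)
      hLf hLh hLg x d hα.1 hα.2
  simp only [Fintype.card_fin] at hdesc
  refine ⟨hdesc, fun σ hσ m hm x d hD α hα => ?_⟩
  have hα₁ : α ≤ 1 := hα.2.trans (min_le_left _ _)
  have hαK : α * ((ρ + mE + mI) * L) ≤ (1 - σ) * m :=
    mul_le_of_le_div₀ (mul_nonneg (sub_nonneg.2 hσ.2.le) hm.le) (by positivity)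
      (hα.2.trans (min_le_right _ _))
  exact armijo_of_quadratic_model (hdesc x d α ⟨hα.1.le, hα₁⟩) hD (sq_nonneg _) hα.1.le hσ.2.le hαK
end

section
/- Fix ρ>0. If the point (x,0,0) together with multipliers (u,v,s,t) is a KKT point of (R_ρ), then x is a KKT point of (P); specifically, x is feasible for (P) and the multipliers μ = (v−u)/ρ and λ = s/ρ satisfy λ ≥ 0, ∇f(x) − ∇h(x)μ − ∇g(x)λ = 0, and λ_i g_i(x) = 0 for all i. -/
open RealInnerProductSpace

theorem Finset.mul_eq_zero_of_sum_mul_eq_zero {ι R : Type*} [Fintype ι]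
    [Semiring R] [PartialOrder R] [IsOrderedRing R] {s a : ι → R}
    (hs : ∀ i, 0 ≤ s i) (ha : ∀ i, 0 ≤ a i) (hsum : ∑ i, s i * a i = 0) (i : ι) :
    s i * a i = 0 :=
  (Finset.sum_eq_zero_iff_of_nonneg fun j _ => mul_nonneg (hs j) (ha j)).mp hsum i
    (Finset.mem_univ i)

theorem sub_sum_div_smul_eq_zero {ι κ K E : Type*} [Fintype ι] [Fintype κ] [Field K]
    [AddCommGroup E] [Module K E] {ρ : K} (hρ : ρ ≠ 0) {a : E} {b : ι → E} {c : κ → E}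
    {u v : ι → K} {s : κ → K}
    (hstat : ρ • a + ∑ i, (u i - v i) • b i - ∑ i, s i • c i = 0) :
    a - ∑ i, ((v i - u i) / ρ) • b i - ∑ i, (s i / ρ) • c i = 0 := by
  have hscaled : ρ • (a - ∑ i, ((v i - u i) / ρ) • b i - ∑ i, (s i / ρ) • c i)
      = ρ • a + ∑ i, (u i - v i) • b i - ∑ i, s i • c i := by
    simp only [smul_sub, Finset.smul_sum, smul_smul, mul_div_cancel₀ _ hρ, ← neg_sub (u _),
      neg_smul, Finset.sum_neg_distrib, sub_neg_eq_add]
  exact (smul_eq_zero.mp (hscaled.trans hstat)).resolve_left hρ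

theorem stmt15_general {n mE mI : ℕ}
    (f : EuclideanSpace ℝ (Fin n) → ℝ)
    (h : Fin mE → EuclideanSpace ℝ (Fin n) → ℝ)
    (g : Fin mI → EuclideanSpace ℝ (Fin n) → ℝ)
    (ρ : ℝ) (hρ : 0 < ρ)
    (x : EuclideanSpace ℝ (Fin n))
    (u v : Fin mE → ℝ) (s : Fin mI → ℝ)
    -- (x,0,0) is feasible for (R_ρ)
    (hfeas : (∀ i, 0 ≤ (0:ℝ) - h i x) ∧ (∀ i, 0 ≤ (0:ℝ) + h i x) ∧
      (∀ i, 0 ≤ (0:ℝ) + g i x) ∧ (∀ _i : Fin mI, (0:ℝ) ≤ 0))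
    -- KKT conditions of (R_ρ) at (x,0,0) with multipliers (u,v,s,t)
    (hs : ∀ i, 0 ≤ s i)
    (hstat : ρ • gradient f x + (∑ i, (u i - v i) • gradient (h i) x)
        - (∑ i, s i • gradient (g i) x) = 0)
    (hcs : ∑ i, s i * ((0:ℝ) + g i x) = 0) :
    -- x is feasible for (P)
    ((∀ i, h i x = 0) ∧ (∀ i, 0 ≤ g i x)) ∧
    -- λ = s/ρ ≥ 0
    (∀ i, 0 ≤ s i / ρ) ∧
    -- stationarity of (P) with μ = (v−u)/ρ, λ = s/ρ
    (gradient f x - (∑ i, ((v i - u i) / ρ) • gradient (h i) x)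
      - (∑ i, (s i / ρ) • gradient (g i) x) = 0) ∧
    -- complementarity
    (∀ i, (s i / ρ) * g i x = 0) := by
  simp only [zero_sub, zero_add, neg_nonneg] at hfeas hcs
  obtain ⟨hh_nonpos, hh_nonneg, hg_nonneg, -⟩ := hfeas
  have hcomp := Finset.mul_eq_zero_of_sum_mul_eq_zero hs hg_nonneg hcs
  refine ⟨⟨fun i => le_antisymm (hh_nonpos i) (hh_nonneg i), hg_nonneg⟩,
    fun i => div_nonneg (hs i) hρ.le, sub_sum_div_smul_eq_zero hρ.ne' hstat, fun i => ?_⟩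
  rw [div_mul_eq_mul_div, hcomp i, zero_div]

/-- If `(x,0,0)` together with multipliers `(u,v,s,t)` is a KKT
point of (R_ρ), then `x` is a KKT point of (P) with multipliers `μ = (v−u)/ρ`
and `λ = s/ρ`. -/
theorem stmt15 {n mE mI : ℕ}
    (f : EuclideanSpace ℝ (Fin n) → ℝ)
    (h : Fin mE → EuclideanSpace ℝ (Fin n) → ℝ)
    (g : Fin mI → EuclideanSpace ℝ (Fin n) → ℝ)
    (hf : ContDiff ℝ 1 f) (hh : ∀ i, ContDiff ℝ 1 (h i)) (hg : ∀ i, ContDiff ℝ 1 (g i))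
    (ρ : ℝ) (hρ : 0 < ρ)
    (x : EuclideanSpace ℝ (Fin n))
    (u v : Fin mE → ℝ) (s t : Fin mI → ℝ)
    -- (x,0,0) is feasible for (R_ρ)
    (hfeas : (∀ i, 0 ≤ (0:ℝ) - h i x) ∧ (∀ i, 0 ≤ (0:ℝ) + h i x) ∧
      (∀ i, 0 ≤ (0:ℝ) + g i x) ∧ (∀ _i : Fin mI, (0:ℝ) ≤ 0))
    -- KKT conditions of (R_ρ) at (x,0,0) with multipliers (u,v,s,t)
    (hu : ∀ i, 0 ≤ u i) (hv : ∀ i, 0 ≤ v i) (hs : ∀ i, 0 ≤ s i) (ht : ∀ i, 0 ≤ t i)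
    (hstat : ρ • gradient f x + (∑ i, (u i - v i) • gradient (h i) x)
        - (∑ i, s i • gradient (g i) x) = 0)
    (huv : ∀ i, 1 - u i - v i = 0) (hst : ∀ i, 1 - s i - t i = 0)
    (hcu : ∑ i, u i * ((0:ℝ) - h i x) = 0)
    (hcv : ∑ i, v i * ((0:ℝ) + h i x) = 0)
    (hcs : ∑ i, s i * ((0:ℝ) + g i x) = 0)
    (hct : ∑ i, t i * (0:ℝ) = 0) :
    -- x is feasible for (P)
    ((∀ i, h i x = 0) ∧ (∀ i, 0 ≤ g i x)) ∧
    -- λ = s/ρ ≥ 0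
    (∀ i, 0 ≤ s i / ρ) ∧
    -- stationarity of (P) with μ = (v−u)/ρ, λ = s/ρ
    (gradient f x - (∑ i, ((v i - u i) / ρ) • gradient (h i) x)
      - (∑ i, (s i / ρ) • gradient (g i) x) = 0) ∧
    -- complementarity
    (∀ i, (s i / ρ) * g i x = 0) :=
  stmt15_general f h g ρ hρ x u v s hfeas hs hstat hcs
end
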